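/- arXiv:2212.09985 — 10 statements merged into one kernel-verified Lean document; each statement's English description precedes it below -/
import Mathlib

section
/- Let h : ℕ → ℕ satisfy the profile condition, let t₀ ≥ 1, and define h₁ : ℕ → ℕ by h₁(t) = h(t) for t ≠ t₀ and h₁(t₀) = 0. If for every u with 1 ≤ u < t₀ the implication holds that h₁(t₀ − u) > 0 implies h₁(u) ≤ t₀ − u, then h₁ satisfies the profile condition. -/
/-- A function `h : ℕ → ℕ` (regarded as defined on positive integers) satisfies the
*profile condition* if for all `u, v ≥ 1`, either `h u ≤ v + h (u + v)` or
`h v ≤ h (u + v)`. -/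
def ProfileCondition (h : ℕ → ℕ) : Prop :=
  ∀ u v : ℕ, 1 ≤ u → 1 ≤ v → h u ≤ v + h (u + v) ∨ h v ≤ h (u + v)

/-- If `h` satisfies the profile condition, `t₀ ≥ 1`, and `h₁`
agrees with `h` except that `h₁ t₀ = 0`, and if for every `1 ≤ u < t₀`,
`h₁ (t₀ - u) > 0` implies `h₁ u ≤ t₀ - u`, then `h₁` satisfies the profile
condition. -/
theorem profileCondition_of_zero_at (h h₁ : ℕ → ℕ)
    (hh : ProfileCondition h)
    (t₀ : ℕ) (ht₀ : 1 ≤ t₀)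
    (hdef : ∀ t, h₁ t = if t = t₀ then 0 else h t)
    (hyp : ∀ u, 1 ≤ u → u < t₀ → 0 < h₁ (t₀ - u) → h₁ u ≤ t₀ - u) :
    ProfileCondition h₁ := by
  intro u v hu hv
  by_cases hu0 : u = t₀
  · left
    rw [hdef u, if_pos hu0]
    omega
  by_cases hv0 : v = t₀
  · right
    rw [hdef v, if_pos hv0]
    omega
  by_cases hs : u + v = t₀
  · -- h₁ (u+v) = 0
    have hz : h₁ (u + v) = 0 := by rw [hdef, if_pos hs]
    rcases Nat.eq_zero_or_pos (h₁ v) with h0 | hpos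
    · right; omega
    · left
      have hlt : u < t₀ := by omega
      have : h₁ u ≤ t₀ - u := by
        apply hyp u hu hlt
        have : t₀ - u = v := by omega
        rw [this]; exact hpos
      omega
  · have e1 : h₁ u = h u := by rw [hdef, if_neg hu0]
    have e2 : h₁ v = h v := by rw [hdef, if_neg hv0]
    have e3 : h₁ (u + v) = h (u + v) := by rw [hdef, if_neg hs]
    rw [e1, e2, e3]
    exact hh u v hu hv
end

section
/- Let n ≥ 2, let a = ⌊(n−1)/2⌋, and let 1 ≤ i ≤ a + 1. Define h : ℕ → ℕ by h(t) = min( (0 if t < i, else i), max(n + 1 − t, 0) ) + 1 for 1 ≤ t ≤ n + 1, and h(t) = 0 for t > n + 1. Then h satisfies the profile condition, and moreover h(t) ≤ max(n + 2 − t, 0) for all t ≥ 1. (h is the profile function of the Hopf subalgebra B_i′(n) of A(n) ⊆ 𝒜₂.) -/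
/-- Let `n ≥ 2`, `a = ⌊(n-1)/2⌋` and `1 ≤ i ≤ a + 1`.  The function
`h` with `h t = min (if t < i then 0 else i) (n + 1 - t) + 1` for `1 ≤ t ≤ n + 1`
and `h t = 0` for `t > n + 1` satisfies the profile condition, and
`h t ≤ n + 2 - t` for all `t ≥ 1` (subtraction is truncated subtraction in `ℕ`).
It is the profile function of the Hopf subalgebra `B_i'(n)` of `A(n)`. -/
theorem profileCondition_Bi' (n a i : ℕ) (hn : 2 ≤ n) (ha : a = (n - 1) / 2)
    (hi1 : 1 ≤ i) (hi2 : i ≤ a + 1) :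
    ProfileCondition
      (fun t => if t ≤ n + 1 then min (if t < i then 0 else i) (n + 1 - t) + 1 else 0) ∧
    ∀ t, 1 ≤ t →
      (if t ≤ n + 1 then min (if t < i then 0 else i) (n + 1 - t) + 1 else 0) ≤ n + 2 - t := by
  constructor
  · intro u v hu hv
    simp only
    split_ifs <;> omega
  · intro t ht
    split_ifs <;> omega
end

section
/- Let n ≥ 2, let a = ⌊(n−1)/2⌋, and let 1 ≤ i ≤ a + 1. Define h : ℕ → ℕ by h(t) = 0 for t < i, h(t) = min(i, max(n + 1 − t, 0)) + 1 for i ≤ t ≤ n + 1, and h(t) = 0 for t > n + 1. Then h satisfies the profile condition. (h is the profile function of the Hopf subalgebra D_i(n) of the mod 2 Steenrod algebra.) -/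
/-- Let `n ≥ 2`, `a = ⌊(n-1)/2⌋` and `1 ≤ i ≤ a + 1`.  The function
`h` with `h t = 0` for `t < i`, `h t = min i (n + 1 - t) + 1` for `i ≤ t ≤ n + 1`
and `h t = 0` for `t > n + 1` satisfies the profile condition.  It is the profile
function of the Hopf subalgebra `D_i(n)` of the mod 2 Steenrod algebra. -/
theorem profileCondition_Di (n a i : ℕ) (hn : 2 ≤ n) (ha : a = (n - 1) / 2)
    (hi1 : 1 ≤ i) (hi2 : i ≤ a + 1) :
    ProfileCondition
      (fun t => if i ≤ t ∧ t ≤ n + 1 then min i (n + 1 - t) + 1 else 0) := by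
  intro u v hu hv
  simp only
  split_ifs <;> omega
end

section
/- Let n ≥ 2, let a = ⌊(n−1)/2⌋, and let 2 ≤ i ≤ a + 1. Define h : ℕ → ℕ by h(t) = 2i + 1 − t for i + 1 ≤ t ≤ 2i − 1 and h(t) = 0 otherwise. Then: (1) h satisfies the profile condition; (2) h(t) ≤ max(2i + 1 − t, 0) for all t ≥ 1; and (3) h(t) ≤ h_{D_i(n)}(t) for all t ≥ 1, where h_{D_i(n)}(t) = min(i, max(n + 1 − t, 0)) + 1 for i ≤ t ≤ n + 1 and h_{D_i(n)}(t) = 0 otherwise. (h is the profile function of the Hopf subalgebra Y_i(n), and (2), (3) express Y_i(n) ⊆ A(2i−1) and Y_i(n) ⊆ D_i(n).) -/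
/-- Let `n ≥ 2`, `a = ⌊(n-1)/2⌋` and `2 ≤ i ≤ a + 1`.  The function
`h` with `h t = 2i + 1 - t` for `i + 1 ≤ t ≤ 2i - 1` and `h t = 0` otherwise
satisfies the profile condition; moreover `h t ≤ 2i + 1 - t` for all `t ≥ 1`
(so `Y_i(n) ⊆ A(2i-1)`) and `h t ≤ h_{D_i(n)} t` for all `t ≥ 1`
(so `Y_i(n) ⊆ D_i(n)`), where `h_{D_i(n)} t = min i (n + 1 - t) + 1` for
`i ≤ t ≤ n + 1` and `0` otherwise.  Subtraction is truncated subtraction in `ℕ`. -/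
theorem profileCondition_Yi (n a i : ℕ) (hn : 2 ≤ n) (ha : a = (n - 1) / 2)
    (hi1 : 2 ≤ i) (hi2 : i ≤ a + 1) :
    ProfileCondition
      (fun t => if i + 1 ≤ t ∧ t ≤ 2 * i - 1 then 2 * i + 1 - t else 0) ∧
    (∀ t, 1 ≤ t →
      (if i + 1 ≤ t ∧ t ≤ 2 * i - 1 then 2 * i + 1 - t else 0) ≤ 2 * i + 1 - t) ∧
    (∀ t, 1 ≤ t →
      (if i + 1 ≤ t ∧ t ≤ 2 * i - 1 then 2 * i + 1 - t else 0) ≤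
        (if i ≤ t ∧ t ≤ n + 1 then min i (n + 1 - t) + 1 else 0)) := by
  subst ha
  refine ⟨?_, ?_, ?_⟩
  · intro u v hu hv
    simp only
    split_ifs <;> omega
  · intro t ht
    split_ifs <;> omega
  · intro t ht
    split_ifs <;> simp_all <;> omega
end

section
/- Let n ≥ 2, let a = ⌊(n−1)/2⌋, and let 2 ≤ i ≤ a + 1. Define h : ℕ → ℕ by h(i) = i + 1, h(2i) = 1, and h(t) = 0 for all other t. Then: (1) h satisfies the profile condition; and (2) h(t) ≤ h_{D_i(n)}(t) for all t ≥ 1, where h_{D_i(n)}(t) = min(i, max(n + 1 − t, 0)) + 1 for i ≤ t ≤ n + 1 and h_{D_i(n)}(t) = 0 otherwise. (h is the profile function of the Hopf subalgebra X_i(n), and (2) expresses X_i(n) ⊆ D_i(n).) -/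
/-- Let `n ≥ 2`, `a = ⌊(n-1)/2⌋` and `2 ≤ i ≤ a + 1`.  The function
`h` with `h i = i + 1`, `h (2i) = 1` and `h t = 0` otherwise satisfies the profile
condition; moreover `h t ≤ h_{D_i(n)} t` for all `t ≥ 1` (so `X_i(n) ⊆ D_i(n)`),
where `h_{D_i(n)} t = min i (n + 1 - t) + 1` for `i ≤ t ≤ n + 1` and `0`
otherwise. -/
theorem profileCondition_Xi (n a i : ℕ) (hn : 2 ≤ n) (ha : a = (n - 1) / 2)
    (hi1 : 2 ≤ i) (hi2 : i ≤ a + 1) :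
    ProfileCondition
      (fun t => if t = i then i + 1 else if t = 2 * i then 1 else 0) ∧
    ∀ t, 1 ≤ t →
      (if t = i then i + 1 else if t = 2 * i then 1 else 0) ≤
        (if i ≤ t ∧ t ≤ n + 1 then min i (n + 1 - t) + 1 else 0) := by
  have h2i : 2 * i ≤ n + 1 := by omega
  constructor
  · intro u v hu hv
    simp only
    split_ifs <;> omega
  · intro t ht
    split_ifs <;> omega
end

section
/- Let A be a finite-dimensional connected graded Poincaré algebra of top degree n over a field k, with augmentation ε. Then the space of left invariants {x ∈ A : h·x = ε(h)·x for all h ∈ A} is exactly the top homogeneous component 𝒜 n (which is one-dimensional over k). -/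
/-- `A` is a finite-dimensional connected graded Poincaré algebra of top degree `n`
with respect to the grading `𝒜`: it is connected (`𝒜 0 = k·1`), vanishes above
degree `n`, and there is a linear functional `e : A → k` vanishing on `𝒜 m` for
`m ≠ n` such that for each `q ≤ n` the pairing
`𝒜 q × 𝒜 (n - q) → k, (x, y) ↦ e (x * y)` is nondegenerate (on both sides). -/
def IsConnectedPoincare (k A : Type*) [Field k] [Ring A] [Algebra k A]
    (𝒜 : ℕ → Submodule k A) (n : ℕ) : Prop :=
  𝒜 0 = Submodule.span k ({1} : Set A) ∧
  (∀ m, n < m → 𝒜 m = ⊥) ∧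
  ∃ e : A →ₗ[k] k,
    (∀ m, m ≠ n → ∀ x ∈ 𝒜 m, e x = 0) ∧
    ∀ q, q ≤ n →
      (∀ x ∈ 𝒜 q, x ≠ 0 → ∃ y ∈ 𝒜 (n - q), e (x * y) ≠ 0) ∧
      (∀ y ∈ 𝒜 (n - q), y ≠ 0 → ∃ x ∈ 𝒜 q, e (x * y) ≠ 0)

/-- For a finite-dimensional connected graded Poincaré algebra `A`
of top degree `n` over a field `k`, with augmentation `ε : A → k` (the algebra
homomorphism vanishing on positive degrees), the space of left invariants
`{x : A | h * x = ε h • x for all h}` is exactly the top component `𝒜 n`,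
which is one-dimensional over `k`. -/
theorem invariants_eq_top_component (k A : Type*) [Field k] [Ring A] [Algebra k A]
    [FiniteDimensional k A] (𝒜 : ℕ → Submodule k A) [GradedAlgebra 𝒜] (n : ℕ)
    (hP : IsConnectedPoincare k A 𝒜 n)
    (ε : A →ₐ[k] k) (hε : ∀ m, 0 < m → ∀ x ∈ 𝒜 m, ε x = 0) :
    {x : A | ∀ h : A, h * x = ε h • x} = (𝒜 n : Set A) ∧
    Module.finrank k (𝒜 n) = 1 := by
  obtain ⟨hconn, htop, e, hvan, hnd⟩ := hP
  classical
  constructor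
  · ext x
    simp only [Set.mem_setOf_eq, SetLike.mem_coe]
    constructor
    · -- invariants ⊆ 𝒜 n
      intro hx
      -- every graded component of x in degree q ≠ n vanishes
      have hcomp : ∀ q, q ≠ n → (DirectSum.decompose 𝒜 x q : A) = 0 := by
        intro q hq
        rcases lt_or_gt_of_ne hq with hlt | hgt
        · -- q < n
          by_contra hne
          have hqle : q ≤ n := le_of_lt hlt
          have hq' : n - (n - q) = q := by omega
          have hxq : (DirectSum.decompose 𝒜 x q : A) ∈ 𝒜 (n - (n - q)) := by
            rw [hq']; exact SetLike.coe_mem _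
          obtain ⟨h, hhmem, hhne⟩ := (hnd (n - q) (Nat.sub_le n q)).2 _ hxq hne
          -- h has positive degree, so ε h = 0 and h * x = 0
          have hεh : ε h = 0 := hε (n - q) (by omega) h hhmem
          have hhx : h * x = 0 := by rw [hx h, hεh, zero_smul]
          -- the degree-n component of h * x is h * x_q
          have hproj : GradedRing.proj 𝒜 n (h * x) =
              h * (DirectSum.decompose 𝒜 x q : A) := by
            conv_lhs => rw [← DirectSum.sum_support_decompose 𝒜 x]
            rw [Finset.mul_sum, map_sum]
            rw [Finset.sum_eq_single q]
            · rw [GradedRing.proj_apply, DirectSum.decompose_of_mem_same 𝒜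
                (show h * (DirectSum.decompose 𝒜 x q : A) ∈ 𝒜 n by
                  have := SetLike.mul_mem_graded hhmem (SetLike.coe_mem
                    (DirectSum.decompose 𝒜 x q))
                  rwa [show n - q + q = n by omega] at this)]
            · intro m _ hm
              rw [GradedRing.proj_apply, DirectSum.decompose_of_mem_ne 𝒜
                (SetLike.mul_mem_graded hhmem (SetLike.coe_mem
                  (DirectSum.decompose 𝒜 x m)))
                (show n - q + m ≠ n by omega)]
            · intro hq''
              rw [DFinsupp.notMem_support_iff.mp hq'']
              simp
          rw [hhx, map_zero] at hproj
          exact hhne (by rw [← hproj, map_zero])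
        · -- q > n : 𝒜 q = ⊥
          exact (Submodule.eq_bot_iff _).mp (htop q hgt) _ (SetLike.coe_mem _)
      -- hence x = its degree-n component
      have := DirectSum.sum_support_decompose 𝒜 x
      rw [← this]
      apply Submodule.sum_mem
      intro q hq
      by_cases hqn : q = n
      · rw [hqn]; exact SetLike.coe_mem _
      · rw [hcomp q hqn]; exact (𝒜 n).zero_mem
    · -- 𝒜 n ⊆ invariants
      intro hx h
      -- first for homogeneous h
      have key : ∀ i, ∀ g ∈ 𝒜 i, g * x = ε g • x := by
        intro i g hg
        rcases Nat.eq_zero_or_pos i with hi | hi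
        · subst hi
          rw [hconn, Submodule.mem_span_singleton] at hg
          obtain ⟨c, rfl⟩ := hg
          rw [smul_mul_assoc, one_mul, map_smul, map_one, smul_eq_mul, mul_one]
        · have h1 : g * x ∈ 𝒜 (i + n) := SetLike.mul_mem_graded hg hx
          rw [htop (i + n) (by omega)] at h1
          rw [Submodule.mem_bot] at h1
          rw [h1, hε i hi g hg, zero_smul]
      conv_lhs => rw [← DirectSum.sum_support_decompose 𝒜 h]
      conv_rhs => rw [← DirectSum.sum_support_decompose 𝒜 h]
      rw [Finset.sum_mul, map_sum, Finset.sum_smul]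
      exact Finset.sum_congr rfl fun i _ => key i _ (SetLike.coe_mem _)
  · -- finrank 𝒜 n = 1
    have e' : (𝒜 n) →ₗ[k] k := e.comp (𝒜 n).subtype
    have hinj : Function.Injective (e.comp (𝒜 n).subtype) := by
      rw [← LinearMap.ker_eq_bot, eq_bot_iff]
      rintro ⟨y, hy⟩ hker
      simp only [LinearMap.mem_ker, LinearMap.coe_comp, Function.comp_apply,
        Submodule.coe_subtype] at hker
      by_contra hne
      have hyne : y ≠ 0 := fun h => hne (by rw [Submodule.mem_bot]; exact Subtype.ext h)
      obtain ⟨z, hz, hez⟩ := (hnd n le_rfl).1 y hy hyne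
      rw [show n - n = 0 by omega, hconn, Submodule.mem_span_singleton] at hz
      obtain ⟨c, rfl⟩ := hz
      rw [mul_smul_comm, mul_one, map_smul, smul_eq_mul, hker, mul_zero] at hez
      exact hez rfl
    have hle : Module.finrank k (𝒜 n) ≤ 1 := by
      have := LinearMap.finrank_le_finrank_of_injective hinj
      simpa using this
    have hge : 1 ≤ Module.finrank k (𝒜 n) := by
      obtain ⟨z, hz, hez⟩ := (hnd n le_rfl).2 1
        (by rw [show n - n = 0 by omega]; exact SetLike.GradedOne.one_mem)
        (fun h => one_ne_zero (α := k) (by rw [← map_one ε, h, map_zero]))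
      rw [mul_one] at hez
      have hzne : z ≠ 0 := fun h => hez (by rw [h, map_zero])
      haveI : Nontrivial (𝒜 n) := ⟨⟨⟨z, hz⟩, 0, fun h => hzne (congrArg Subtype.val h)⟩⟩
      exact Module.finrank_pos
    omega
end

section
/- Let A be a finite-dimensional connected graded Poincaré algebra of top degree n over a field k, with augmentation ε, and let t be a nonzero element of the top component 𝒜 n. If M is a finitely generated free left A-module, then the space of invariants M^A := {x ∈ M : h•x = ε(h)·x for all h ∈ A} equals t•M := {t•m : m ∈ M}. -/
/-! Left multiplication acts on the top-degree line `k ∙ t` through the augmentation, since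
everything of positive degree pushes `t` above degree `n`. Conversely a left invariant `a` of `A`
lies in top degree: a nonzero component `a_q` with `q < n` pairs nontrivially with some `x` of
positive degree `n - q`, yet `x * a = ε x • a = 0`. Hence the invariants of `A` are `k ∙ t ⊆ t * A`,
and in a free module `M ≅ ι →₀ A` invariance can be checked coordinatewise. -/

open DirectSum

theorem DirectSum.mem_of_decompose_eq_zero {ι M σ : Type*} [DecidableEq ι] [AddCommMonoid M]
    [SetLike σ M] [AddSubmonoidClass σ M] (ℳ : ι → σ) [Decomposition ℳ] {a : M} {i : ι}
    (h : ∀ j, j ≠ i → (decompose ℳ a j : M) = 0) : a ∈ ℳ i := by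
  classical
  rw [← sum_support_decompose ℳ a]
  refine sum_mem fun j _ => ?_
  obtain rfl | hj := eq_or_ne j i
  · exact SetLike.coe_mem _
  · rw [h j hj]
    exact zero_mem _

section GradedAlgebra

variable {k A : Type*} [CommSemiring k] [Semiring A] [Algebra k A] {𝒜 : ℕ → Submodule k A}
  [GradedAlgebra 𝒜] {n : ℕ}

theorem mul_eq_smul_of_mem_top (h0 : 𝒜 0 = k ∙ (1 : A)) (htop : ∀ m, n < m → 𝒜 m = ⊥)
    {ε : A →ₐ[k] k} (hε : ∀ m, 0 < m → ∀ x ∈ 𝒜 m, ε x = 0) {t : A} (ht : t ∈ 𝒜 n) (h : A) :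
    h * t = ε h • t := by
  induction h using DirectSum.Decomposition.inductionOn 𝒜 with
  | zero => simp
  | @homogeneous i x =>
    obtain rfl | hi := Nat.eq_zero_or_pos i
    · have hx : (x : A) ∈ k ∙ (1 : A) := h0 ▸ x.2
      obtain ⟨c, hc⟩ := Submodule.mem_span_singleton.mp hx
      simp [← hc]
    · have hxt : (x : A) * t ∈ 𝒜 (i + n) := SetLike.mul_mem_graded x.2 ht
      rw [htop (i + n) (by omega), Submodule.mem_bot] at hxt
      rw [hxt, hε i hi x x.2, zero_smul]
  | add a b ha hb => rw [add_mul, ha, hb, map_add, add_smul]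

theorem apply_mul_eq_apply_mul_decompose {e : A →ₗ[k] k}
    (he : ∀ m, m ≠ n → ∀ x ∈ 𝒜 m, e x = 0) {p q : ℕ} (hpq : p + q = n) {x : A} (hx : x ∈ 𝒜 p)
    (a : A) : e (x * a) = e (x * decompose 𝒜 a q) := by
  induction a using DirectSum.Decomposition.inductionOn 𝒜 with
  | zero => simp
  | @homogeneous j y =>
    obtain rfl | hj := eq_or_ne j q
    · rw [decompose_of_mem_same 𝒜 y.2]
    · rw [decompose_of_mem_ne 𝒜 y.2 hj, mul_zero, map_zero]
      exact he _ (by omega) _ (SetLike.mul_mem_graded hx y.2)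
  | add a b ha hb => rw [mul_add, map_add, ha, hb, decompose_add, DirectSum.add_apply,
      Submodule.coe_add, mul_add, map_add]

end GradedAlgebra

namespace IsConnectedPoincare

variable {k A : Type*} [Field k] [Ring A] [Algebra k A] {𝒜 : ℕ → Submodule k A} {n : ℕ}

theorem mem_top_of_mul_eq_smul [GradedAlgebra 𝒜] (hP : IsConnectedPoincare k A 𝒜 n)
    {ε : A →ₐ[k] k} (hε : ∀ m, 0 < m → ∀ x ∈ 𝒜 m, ε x = 0) {a : A} (ha : ∀ h, h * a = ε h • a) :
    a ∈ 𝒜 n := by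
  obtain ⟨-, htop, e, he, hnd⟩ := hP
  refine mem_of_decompose_eq_zero 𝒜 fun q hq => ?_
  obtain hlt | hgt := hq.lt_or_gt
  · by_contra haq
    have hmem : (decompose 𝒜 a q : A) ∈ 𝒜 (n - (n - q)) := by
      rw [Nat.sub_sub_self hlt.le]
      exact SetLike.coe_mem _
    obtain ⟨x, hx, hxa⟩ := (hnd (n - q) (Nat.sub_le n q)).2 _ hmem haq
    apply hxa
    rw [← apply_mul_eq_apply_mul_decompose he (by omega) hx, ha, hε _ (by omega) x hx,
      zero_smul, map_zero]
  · simpa [htop q hgt] using (decompose 𝒜 a q).2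

theorem top_le_span_singleton (hP : IsConnectedPoincare k A 𝒜 n) {t : A} (ht : t ∈ 𝒜 n)
    (ht0 : t ≠ 0) : 𝒜 n ≤ k ∙ t := by
  obtain ⟨h0, -, e, -, hnd⟩ := hP
  have he : ∀ z ∈ 𝒜 n, e z = 0 → z = 0 := fun z hz hez => by_contra fun hz0 => by
    obtain ⟨x, hx, hxz⟩ := (hnd 0 n.zero_le).2 z (by simpa using hz) hz0
    obtain ⟨c, rfl⟩ := Submodule.mem_span_singleton.mp (h0 ▸ hx)
    simp [hez] at hxz
  have het : e t ≠ 0 := fun h => ht0 (he t ht h)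
  intro z hz
  have hz' : z - (e z / e t) • t = 0 :=
    he _ (sub_mem hz (Submodule.smul_mem _ _ ht)) (by simp [het])
  rw [sub_eq_zero.mp hz']
  exact Submodule.smul_mem _ _ (Submodule.mem_span_singleton_self t)

end IsConnectedPoincare

theorem Module.Free.setOf_forall_smul_eq_eq_range_smul {k A M : Type*} [CommSemiring k]
    [Semiring A] [Algebra k A] [AddCommMonoid M] [Module k M] [Module A M] [IsScalarTower k A M]
    [Module.Free A M] (ε : A → k) {t : A} (ht : ∀ h, h * t = ε h • t)
    (hA : ∀ a : A, (∀ h, h * a = ε h • a) → ∃ b, t * b = a) :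
    {x : M | ∀ h : A, h • x = ε h • x} = Set.range (fun m : M => t • m) := by
  ext x
  constructor
  · intro hx
    let b := Module.Free.chooseBasis A M
    have hcoord (i) (h : A) : h * b.repr x i = ε h • b.repr x i := by
      have hxi := congr(b.repr $(hx h) i)
      rwa [← algebraMap_smul A (ε h) x, map_smul, map_smul, Finsupp.smul_apply,
        Finsupp.smul_apply, smul_eq_mul, smul_eq_mul, ← Algebra.smul_def] at hxi
    choose c hc using fun i => hA _ (hcoord i)
    refine ⟨∑ i ∈ (b.repr x).support, c i • b i, ?_⟩
    simp_rw [Finset.smul_sum, smul_smul, hc]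
    exact b.linearCombination_repr x
  · rintro ⟨m, rfl⟩ h
    dsimp only
    rw [smul_smul, ht, smul_assoc]

theorem invariants_eq_top_smul_general (k A : Type*) [Field k] [Ring A] [Algebra k A]
    (𝒜 : ℕ → Submodule k A) [GradedAlgebra 𝒜] (n : ℕ)
    (hP : IsConnectedPoincare k A 𝒜 n)
    (ε : A →ₐ[k] k) (hε : ∀ m, 0 < m → ∀ x ∈ 𝒜 m, ε x = 0)
    (t : A) (htn : t ∈ 𝒜 n) (ht0 : t ≠ 0)
    (M : Type*) [AddCommGroup M] [Module k M] [Module A M] [IsScalarTower k A M]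
    (hfree : Module.Free A M) :
    {x : M | ∀ h : A, h • x = ε h • x} = Set.range (fun m : M => t • m) := by
  refine Module.Free.setOf_forall_smul_eq_eq_range_smul ε
    (mul_eq_smul_of_mem_top hP.1 hP.2.1 hε htn) fun a ha => ?_
  obtain ⟨c, rfl⟩ := Submodule.mem_span_singleton.mp
    (hP.top_le_span_singleton htn ht0 (hP.mem_top_of_mul_eq_smul hε ha))
  exact ⟨algebraMap k A c, by rw [← Algebra.commutes, Algebra.smul_def]⟩

/-- Let `A` be a finite-dimensional connected graded Poincaré
algebra of top degree `n` over `k` with augmentation `ε`, and let `t` be a nonzero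
element of the top component `𝒜 n`.  If `M` is a finitely generated free left
`A`-module, then the space of invariants `M^A = {x : M | h • x = ε h • x for all h}`
equals `t • M = {t • m | m : M}`. -/
theorem invariants_eq_top_smul (k A : Type*) [Field k] [Ring A] [Algebra k A]
    [FiniteDimensional k A] (𝒜 : ℕ → Submodule k A) [GradedAlgebra 𝒜] (n : ℕ)
    (hP : IsConnectedPoincare k A 𝒜 n)
    (ε : A →ₐ[k] k) (hε : ∀ m, 0 < m → ∀ x ∈ 𝒜 m, ε x = 0)
    (t : A) (htn : t ∈ 𝒜 n) (ht0 : t ≠ 0)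
    (M : Type*) [AddCommGroup M] [Module k M] [Module A M] [IsScalarTower k A M]
    (hfree : Module.Free A M) (hfg : Module.Finite A M) :
    {x : M | ∀ h : A, h • x = ε h • x} = Set.range (fun m : M => t • m) :=
  invariants_eq_top_smul_general k A 𝒜 n hP ε hε t htn ht0 M hfree
end

section
/- Let A be a finite-dimensional connected graded Poincaré algebra of top degree n over a field k, and let t be a nonzero element of the top component 𝒜 n. Let M be a left A-module and let m₁, …, m_s ∈ M be elements such that t•m₁, …, t•m_s are linearly independent over k. Then the A-module homomorphism A^s → M sending (a₁, …, a_s) to a₁•m₁ + ⋯ + a_s•m_s is injective; in particular, m₁, …, m_s generate a free A-submodule of M of rank s. -/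
/-- Let `A` be a finite-dimensional connected graded Poincaré
algebra of top degree `n` over `k`, and `t` a nonzero element of the top component
`𝒜 n`.  If `M` is a left `A`-module and `m₁, …, m_s ∈ M` are such that
`t • m₁, …, t • m_s` are `k`-linearly independent, then the `A`-module map
`A^s → M`, `(a₁, …, a_s) ↦ ∑ a_j • m_j`, is injective; in particular the `m_j`
generate a free `A`-submodule of `M` of rank `s`. -/
theorem free_submodule_of_top_smul_linearIndependent (k A : Type*) [Field k] [Ring A]
    [Algebra k A] [FiniteDimensional k A]
    (𝒜 : ℕ → Submodule k A) [GradedAlgebra 𝒜] (n : ℕ)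
    (hP : IsConnectedPoincare k A 𝒜 n)
    (t : A) (htn : t ∈ 𝒜 n) (ht0 : t ≠ 0)
    (M : Type*) [AddCommGroup M] [Module k M] [Module A M] [IsScalarTower k A M]
    (s : ℕ) (m : Fin s → M)
    (hindep : LinearIndependent k (fun j : Fin s => t • m j)) :
    Function.Injective (fun a : Fin s → A => ∑ j : Fin s, a j • m j) := by
  classical
  obtain ⟨h0, htop, e, he, hnd⟩ := hP
  -- every nonzero element of the top component has nonzero `e`-value
  have hen : ∀ z ∈ 𝒜 n, z ≠ 0 → e z ≠ 0 := by
    intro z hz hz0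
    obtain ⟨y, hy, hey⟩ := (hnd n le_rfl).1 z hz hz0
    rw [Nat.sub_self, h0, Submodule.mem_span_singleton] at hy
    obtain ⟨c, rfl⟩ := hy
    intro h
    apply hey
    rw [mul_smul_comm, mul_one, map_smul, smul_eq_mul, h, mul_zero]
  have het : e t ≠ 0 := hen t htn ht0
  -- every element of the top component is a multiple of `t`
  have hspan : ∀ z ∈ 𝒜 n, z = (e z / e t) • t := by
    intro z hz
    by_contra hne
    have h1 : z - (e z / e t) • t ∈ 𝒜 n := sub_mem hz (Submodule.smul_mem _ _ htn)
    apply hen _ h1 (sub_ne_zero.mpr hne)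
    rw [map_sub, map_smul, smul_eq_mul, div_mul_cancel₀ _ het, sub_self]
  intro a b hab
  by_contra hne
  set c : Fin s → A := a - b with hc
  obtain ⟨j0, hj0⟩ : ∃ j, c j ≠ 0 := by
    by_contra h
    push_neg at h
    exact hne (funext fun j => sub_eq_zero.mp (h j))
  have hsum : ∑ j : Fin s, c j • m j = 0 := by
    simp only [hc, Pi.sub_apply, sub_smul, Finset.sum_sub_distrib]
    exact sub_eq_zero.mpr hab
  -- the set of degrees in which some `c i` has a nonzero component
  set S : Set ℕ := {d | ∃ i, (DirectSum.decompose 𝒜 (c i)) d ≠ 0} with hSdef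
  have hSne : S.Nonempty := by
    by_contra h
    rw [Set.not_nonempty_iff_eq_empty] at h
    have hall : ∀ d, (DirectSum.decompose 𝒜 (c j0)) d = 0 := by
      intro d
      by_contra hd
      have : d ∈ S := ⟨j0, hd⟩
      rw [h] at this
      exact Set.notMem_empty d this
    apply hj0
    calc c j0 = ∑ p ∈ (DirectSum.decompose 𝒜 (c j0)).support,
        ((DirectSum.decompose 𝒜 (c j0)) p : A) :=
          (DirectSum.sum_support_decompose 𝒜 _).symm
      _ = 0 := Finset.sum_eq_zero fun p _ => by rw [hall p, ZeroMemClass.coe_zero]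
  set d : ℕ := sInf S with hd
  have hdS : d ∈ S := Nat.sInf_mem hSne
  have hmin : ∀ p < d, ∀ i, (DirectSum.decompose 𝒜 (c i)) p = 0 := by
    intro p hp i
    by_contra hpi
    exact Nat.notMem_of_lt_sInf hp ⟨i, hpi⟩
  obtain ⟨j, hj⟩ := hdS
  set z : A := ((DirectSum.decompose 𝒜 (c j)) d : A) with hz
  have hzmem : z ∈ 𝒜 d := SetLike.coe_mem _
  have hz0 : z ≠ 0 := fun h => hj (Subtype.ext h)
  have hdn : d ≤ n := by
    by_contra h
    push_neg at h
    rw [htop d h] at hzmem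
    exact hz0 (Submodule.mem_bot k |>.mp hzmem)
  -- find `y` pairing nontrivially with `z`
  obtain ⟨y, hy, hey⟩ : ∃ x ∈ 𝒜 (n - d), e (x * z) ≠ 0 := by
    have := (hnd (n - d) (Nat.sub_le n d)).2
    rw [Nat.sub_sub_self hdn] at this
    exact this z hzmem hz0
  -- `y * c i` only sees the degree-`d` component
  have hyc : ∀ i, y * c i = y * ((DirectSum.decompose 𝒜 (c i)) d : A) := by
    intro i
    conv_lhs => rw [← DirectSum.sum_support_decompose 𝒜 (c i)]
    rw [Finset.mul_sum]
    refine Finset.sum_eq_single d ?_ ?_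
    · intro p hp hpd
      rcases lt_or_gt_of_ne hpd with hlt | hgt
      · exact absurd (hmin p hlt i) (DFinsupp.mem_support_iff.mp hp)
      · have hmem : y * ((DirectSum.decompose 𝒜 (c i)) p : A) ∈ 𝒜 (n - d + p) :=
          SetLike.mul_mem_graded hy (SetLike.coe_mem _)
        rw [htop _ (by omega)] at hmem
        exact Submodule.mem_bot k |>.mp hmem
    · intro hd'
      rw [DFinsupp.notMem_support_iff.mp hd', ZeroMemClass.coe_zero, mul_zero]
  have hycn : ∀ i, y * c i ∈ 𝒜 n := by
    intro i
    rw [hyc i]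
    have hmem : y * ((DirectSum.decompose 𝒜 (c i)) d : A) ∈ 𝒜 (n - d + d) :=
      SetLike.mul_mem_graded hy (SetLike.coe_mem _)
    rwa [Nat.sub_add_cancel hdn] at hmem
  set K : Fin s → k := fun i => e (y * c i) / e t with hK
  have hKt : ∀ i, y * c i = K i • t := fun i => hspan _ (hycn i)
  have hKj : K j ≠ 0 := by
    have : e (y * c j) ≠ 0 := by rw [hyc j]; exact hey
    exact div_ne_zero this het
  have hfin : ∑ i : Fin s, K i • (t • m i) = 0 := by
    calc ∑ i : Fin s, K i • (t • m i) = ∑ i : Fin s, (K i • t) • m i := by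
          simp only [smul_assoc]
      _ = ∑ i : Fin s, (y * c i) • m i := by simp only [← hKt]
      _ = ∑ i : Fin s, y • (c i • m i) := by simp only [mul_smul]
      _ = y • ∑ i : Fin s, c i • m i := (Finset.smul_sum).symm
      _ = 0 := by rw [hsum, smul_zero]
  exact hKj ((Fintype.linearIndependent_iff.mp hindep K hfin) j)
end

section
/- Let A be a finite-dimensional connected graded Poincaré algebra of top degree n over a field k. Let B ⊆ A be a graded unital subalgebra (i.e. B is spanned by its homogeneous elements B ∩ 𝒜 j) with top degree m: B ∩ 𝒜 j = 0 for j > m, and let t_B be a nonzero element of B ∩ 𝒜 m. Write B⁺ = ⊕_{j>0} (B ∩ 𝒜 j). Then: (i) a · t_B = 0 for every element a of the left ideal A·B⁺ generated by B⁺; and (ii) there exists a homogeneous element x ∈ 𝒜 (n−m) with x · t_B ≠ 0; for any such x, x · t_B spans the one-dimensional top component 𝒜 n and x ∉ A·B⁺. -/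
/-- Let `A` be a finite-dimensional connected graded Poincaré
algebra of top degree `n` over `k`, `B ⊆ A` a graded unital subalgebra (closed
under taking homogeneous components) of top degree `m`, and `t_B` a nonzero element
of `B ∩ 𝒜 m`.  Let `A·B⁺` be the left ideal generated by the positive-degree part
`B⁺ = ⋃_{j>0} (B ∩ 𝒜 j)` of `B`.  Then (i) `a * t_B = 0` for all `a ∈ A·B⁺`, and
(ii) there is a homogeneous `x ∈ 𝒜 (n - m)` with `x * t_B ≠ 0`, and any such `x`
has `x * t_B` spanning the one-dimensional top component `𝒜 n`, and `x ∉ A·B⁺`. -/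
theorem top_of_graded_subalgebra (k A : Type*) [Field k] [Ring A] [Algebra k A]
    [FiniteDimensional k A] (𝒜 : ℕ → Submodule k A) [GradedAlgebra 𝒜] (n : ℕ)
    (hP : IsConnectedPoincare k A 𝒜 n)
    (B : Subalgebra k A)
    (hBgraded : ∀ x ∈ B, ∀ i : ℕ, (DirectSum.decompose 𝒜 x i : A) ∈ B)
    (m : ℕ) (hBtop : ∀ j, m < j → ∀ x ∈ B, x ∈ 𝒜 j → x = 0)
    (tB : A) (htBB : tB ∈ B) (htBm : tB ∈ 𝒜 m) (htB0 : tB ≠ 0) :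
    (∀ a ∈ Submodule.span A (⋃ j > 0, ((B : Set A) ∩ (𝒜 j : Set A))), a * tB = 0) ∧
    (∃ x ∈ 𝒜 (n - m), x * tB ≠ 0) ∧
    (∀ x ∈ 𝒜 (n - m), x * tB ≠ 0 →
      Submodule.span k ({x * tB} : Set A) = 𝒜 n ∧
      x ∉ Submodule.span A (⋃ j > 0, ((B : Set A) ∩ (𝒜 j : Set A)))) := by

  obtain ⟨h0, htop, e, he0, hnd⟩ := hP
  have hmn : m ≤ n := by
    by_contra h
    push_neg at h
    exact htB0 (by simpa [htop m h] using htBm)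
  have hkey : ∀ a ∈ Submodule.span A (⋃ j > 0, ((B : Set A) ∩ (𝒜 j : Set A))),
      a * tB = 0 := by
    intro a ha
    induction ha using Submodule.span_induction with
    | mem s hs =>
      simp only [Set.mem_iUnion, Set.mem_inter_iff, SetLike.mem_coe] at hs
      obtain ⟨j, hj, hsB, hsj⟩ := hs
      have h1 : s * tB ∈ 𝒜 (j + m) := SetLike.mul_mem_graded hsj htBm
      exact hBtop (j + m) (by omega) _ (mul_mem hsB htBB) h1
    | zero => simp
    | add a b _ _ ha hb => rw [add_mul, ha, hb, add_zero]
    | smul r a _ ha => rw [smul_eq_mul, mul_assoc, ha, mul_zero]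
  have hen : ∀ z ∈ 𝒜 n, e z = 0 → z = 0 := by
    intro z hz hez
    by_contra hz0
    obtain ⟨x, hx0, hex⟩ := (hnd 0 (Nat.zero_le n)).2 z (by simpa using hz) hz0
    rw [h0, Submodule.mem_span_singleton] at hx0
    obtain ⟨c, rfl⟩ := hx0
    apply hex
    rw [smul_mul_assoc, one_mul, map_smul, hez, smul_zero]
  refine ⟨hkey, ?_, ?_⟩
  · obtain ⟨x, hx, hex⟩ := (hnd (n - m) (Nat.sub_le n m)).2 tB
      (by rw [Nat.sub_sub_self hmn]; exact htBm) htB0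
    refine ⟨x, hx, fun h => hex ?_⟩
    rw [h, map_zero]
  · intro x hx hxtB
    have hxtn : x * tB ∈ 𝒜 n := by
      have := SetLike.mul_mem_graded hx htBm
      rwa [Nat.sub_add_cancel hmn] at this
    have hext : e (x * tB) ≠ 0 := fun h => hxtB (hen _ hxtn h)
    constructor
    · apply le_antisymm
      · rw [Submodule.span_le, Set.singleton_subset_iff]
        exact hxtn
      · intro z hz
        rw [Submodule.mem_span_singleton]
        refine ⟨e z / e (x * tB), ?_⟩
        have hw : z - (e z / e (x * tB)) • (x * tB) = 0 := by
          apply hen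
          · exact Submodule.sub_mem _ hz (Submodule.smul_mem _ _ hxtn)
          · rw [map_sub, map_smul, smul_eq_mul, div_mul_cancel₀ _ hext, sub_self]
        have := sub_eq_zero.mp hw
        exact this.symm
    · exact fun hmem => hxtB (hkey x hmem)
end

section
/- Let A be a finite-dimensional connected graded Poincaré algebra of top degree N over a field k. Let E₁ and E₂ be graded unital subalgebras of A which are themselves connected Poincaré algebras with respect to the induced grading, and assume A is free as a left module over E₁ and as a left module over E₂. Let M be a finitely generated graded left A-module (a ℤ-graded k-vector space M = ⊕_j ℳ j with 𝒜 i • ℳ j ⊆ ℳ (i+j), bounded below) which is free as a left E₁-module and free as a left E₂-module. Suppose there are nonzero homogeneous elements t₁ ∈ E₁ and t₂ ∈ E₂ with deg t₁ + deg t₂ = N, and suppose that every nonzero homogeneous element y of E₂ of positive degree satisfies deg y > deg t₁, except possibly for the nonzero scalar multiples of one fixed homogeneous element z ∈ E₂ satisfying z² = 0, z·t₁ ∈ E₁ and z·t₁ ≠ 0. Then M is a free left A-module. -/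
/-- A graded unital subalgebra `E` of the graded algebra `A` is a connected Poincaré
algebra of top degree `nE` for the induced grading (with components `E ∩ 𝒜 j`):
its degree-zero part consists of the scalar multiples of `1`, its components vanish
above degree `nE`, and there is a `k`-linear functional (given here as a functional
on `A`, only its restriction to `E` matters) vanishing on `E ∩ 𝒜 m` for `m ≠ nE`
such that for each `q ≤ nE` the multiplication pairing
`(E ∩ 𝒜 q) × (E ∩ 𝒜 (nE - q)) → k` is nondegenerate on both sides. -/
def SubalgebraIsConnectedPoincare (k A : Type*) [Field k] [Ring A] [Algebra k A]
    (𝒜 : ℕ → Submodule k A) (E : Subalgebra k A) (nE : ℕ) : Prop :=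
  (∀ x ∈ E, x ∈ 𝒜 0 → ∃ c : k, x = c • (1 : A)) ∧
  (∀ j, nE < j → ∀ x ∈ E, x ∈ 𝒜 j → x = 0) ∧
  ∃ e : A →ₗ[k] k,
    (∀ m, m ≠ nE → ∀ x ∈ E, x ∈ 𝒜 m → e x = 0) ∧
    ∀ q, q ≤ nE →
      (∀ x ∈ E, x ∈ 𝒜 q → x ≠ 0 → ∃ y ∈ E, y ∈ 𝒜 (nE - q) ∧ e (x * y) ≠ 0) ∧
      (∀ y ∈ E, y ∈ 𝒜 (nE - q) → y ≠ 0 → ∃ x ∈ E, x ∈ 𝒜 q ∧ e (x * y) ≠ 0)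

/-!
Induct on the dimension of a graded submodule `X ⊆ M` that is free over `E₁` and `E₂`, and let
`m ∈ X` be a nonzero element of lowest degree. If a nonzero homogeneous `u ∈ Eᵢ` killed `m`, the
`Eᵢ`-coordinates of `m` would lie in the augmentation ideal, putting `m` in degrees above its own.
Applied to `E₁`, this gives `(z t₁) • m ≠ 0`. For a top class `ω₂` of `E₂`, `(ω₂ t₁) • m = 0`
would likewise write `t₁ • m` with coefficients in `E₂` of degrees `1, …, d₁`, i.e. as a multiple
of `z`, and then `z² = 0` would kill `(z t₁) • m`. So `ω₂ t₁`, of degree `N` by counting, acts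
nontrivially on `m`. As `A` is Frobenius, `A • m ≅ A` then splits off `X` as a graded direct
summand, and the complement is projective, hence free by Nakayama, over `E₁` and `E₂`.
-/

open DirectSum

section DegreeFiltration

variable {k A : Type*} [Field k] [Ring A] [Algebra k A] (𝒜 : ℕ → Submodule k A)

def degreeGE (t : ℕ) : Submodule k A :=
  Submodule.span k {x | ∃ s, t ≤ s ∧ x ∈ 𝒜 s}

variable {𝒜}

lemma mem_degreeGE_of_mem {t s : ℕ} (h : t ≤ s) {x : A} (hx : x ∈ 𝒜 s) : x ∈ degreeGE 𝒜 t :=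
  Submodule.subset_span ⟨s, h, hx⟩

lemma degreeGE_eq_bot {N t : ℕ} (hvan : ∀ m, N < m → 𝒜 m = ⊥) (ht : N < t) :
    degreeGE 𝒜 t = ⊥ := by
  rw [degreeGE, Submodule.span_eq_bot]
  rintro x ⟨s, hts, hxs⟩
  simpa [hvan s (by omega)] using hxs

lemma mem_of_mem_of_le {N n : ℕ} (hvan : ∀ m, N < m → 𝒜 m = ⊥) {x : A} (hx : x ∈ 𝒜 n)
    (hn : N ≤ n) : x ∈ 𝒜 N := by
  obtain rfl | hlt := hn.eq_or_lt
  · exact hx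
  · rw [hvan n hlt, Submodule.mem_bot] at hx
    exact hx ▸ zero_mem _

lemma mul_mem_degreeGE [SetLike.GradedMonoid 𝒜] {t t' : ℕ} {x y : A} (hx : x ∈ degreeGE 𝒜 t)
    (hy : y ∈ degreeGE 𝒜 t') : x * y ∈ degreeGE 𝒜 (t + t') := by
  induction hx using Submodule.span_induction with
  | mem x hx =>
    obtain ⟨s, hts, hxs⟩ := hx
    induction hy using Submodule.span_induction with
    | mem y hy =>
      obtain ⟨s', hts', hys⟩ := hy
      exact mem_degreeGE_of_mem (by omega) (SetLike.mul_mem_graded hxs hys)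
    | zero => simp
    | add y y' _ _ h h' => rw [mul_add]; exact add_mem h h'
    | smul c y _ h => rw [mul_smul_comm]; exact Submodule.smul_mem _ _ h
  | zero => simp
  | add x x' _ _ h h' => rw [add_mul]; exact add_mem h h'
  | smul c x _ h => rw [smul_mul_assoc]; exact Submodule.smul_mem _ _ h

end DegreeFiltration

section ConnectedGraded

variable {k A : Type*} [Field k] [Ring A] [Algebra k A] {𝒜 : ℕ → Submodule k A} [GradedAlgebra 𝒜]
  (hconn : 𝒜 0 = Submodule.span k {1})
include hconn

lemma exists_sub_smul_one_mem_degreeGE_one (f : A) : ∃ c : k, f - c • 1 ∈ degreeGE 𝒜 1 := by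
  have hf₀ : (decompose 𝒜 f 0 : A) ∈ Submodule.span k {1} := hconn ▸ (decompose 𝒜 f 0).2
  obtain ⟨c, hc⟩ := Submodule.mem_span_singleton.mp hf₀
  refine ⟨c, hc ▸ ?_⟩
  clear hc hf₀
  induction f using Decomposition.inductionOn 𝒜 with
  | zero => simp
  | @homogeneous i x =>
    obtain rfl | hi := eq_or_ne i 0
    · simp
    · rw [decompose_of_mem_ne 𝒜 x.2 hi, sub_zero]
      exact mem_degreeGE_of_mem (Nat.one_le_iff_ne_zero.mpr hi) x.2
  | add f f' h h' =>
    rw [decompose_add, DirectSum.add_apply, Submodule.coe_add, add_sub_add_comm]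
    exact add_mem h h'

lemma decompose_zero_eq_zero_of_mul_eq_zero {q : ℕ} {u f : A} (hu : u ∈ 𝒜 q) (hu0 : u ≠ 0)
    (h : u * f = 0) : (decompose 𝒜 f 0 : A) = 0 := by
  have hf₀ : (decompose 𝒜 f 0 : A) ∈ Submodule.span k {1} := hconn ▸ (decompose 𝒜 f 0).2
  obtain ⟨c, hc⟩ := Submodule.mem_span_singleton.mp hf₀
  have hcomp := coe_decompose_mul_of_left_mem_of_le 𝒜 (b := f) hu le_rfl
  rw [h, Nat.sub_self, ← hc, mul_smul_comm, mul_one] at hcomp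
  simp only [decompose_zero, DirectSum.zero_apply, ZeroMemClass.coe_zero] at hcomp
  rw [← hc, (smul_eq_zero.mp hcomp.symm).resolve_right hu0, zero_smul]

end ConnectedGraded

section Poincare

variable {k A : Type*} [Field k] [Ring A] [Algebra k A]

/-- The clauses of `IsConnectedPoincare` that concern the functional `e`. -/
def IsPoincareFunctional (𝒜 : ℕ → Submodule k A) (N : ℕ) (e : A →ₗ[k] k) : Prop :=
  (∀ m, m ≠ N → ∀ x ∈ 𝒜 m, e x = 0) ∧
  ∀ q, q ≤ N →
    (∀ x ∈ 𝒜 q, x ≠ 0 → ∃ y ∈ 𝒜 (N - q), e (x * y) ≠ 0) ∧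
    (∀ y ∈ 𝒜 (N - q), y ≠ 0 → ∃ x ∈ 𝒜 q, e (x * y) ≠ 0)

namespace IsPoincareFunctional

variable {𝒜 : ℕ → Submodule k A} [GradedAlgebra 𝒜] {N : ℕ} {e : A →ₗ[k] k}
  (he : IsPoincareFunctional 𝒜 N e)
include he

lemma e_mul_eq_e_mul_decompose {p : ℕ} (hp : p ≤ N) {a : A} (ha : a ∈ 𝒜 p) (b : A) :
    e (a * b) = e (a * decompose 𝒜 b (N - p)) := by
  induction b using Decomposition.inductionOn 𝒜 with
  | zero => simp
  | @homogeneous s b =>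
    obtain rfl | hs := eq_or_ne s (N - p)
    · rw [decompose_coe, of_eq_same]
    · rw [decompose_of_mem_ne 𝒜 b.2 hs, mul_zero, map_zero]
      exact he.1 (p + s) (by omega) _ (SetLike.mul_mem_graded ha b.2)
  | add b b' h h' => rw [mul_add, map_add, h, h', decompose_add, DirectSum.add_apply,
      Submodule.coe_add, mul_add, map_add]

lemma e_eq_e_decompose (b : A) : e b = e (decompose 𝒜 b N) := by
  simpa using he.e_mul_eq_e_mul_decompose (Nat.zero_le N) (SetLike.one_mem_graded 𝒜) b

lemma decompose_eq_zero_of_forall_e_mul_eq_zero {s : ℕ} (hs : s ≤ N) {b : A}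
    (hb : ∀ a ∈ 𝒜 (N - s), e (a * b) = 0) : (decompose 𝒜 b s : A) = 0 := by
  by_contra hne
  have hpair := (he.2 (N - s) (Nat.sub_le N s)).2
  rw [Nat.sub_sub_self hs] at hpair
  obtain ⟨a, ha, hab⟩ := hpair _ (decompose 𝒜 b s).2 hne
  have hab' := hb a ha
  rw [he.e_mul_eq_e_mul_decompose (Nat.sub_le N s) ha, Nat.sub_sub_self hs] at hab'
  exact hab hab'

lemma eq_zero_of_forall_e_mul_eq_zero (hvan : ∀ m, N < m → 𝒜 m = ⊥) {b : A}
    (hb : ∀ a, e (a * b) = 0) : b = 0 := by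
  apply (decompose 𝒜).injective
  ext s : 1
  rw [decompose_zero, DirectSum.zero_apply]
  apply Subtype.ext
  rw [ZeroMemClass.coe_zero]
  rcases le_or_gt s N with hs | hs
  · exact he.decompose_eq_zero_of_forall_e_mul_eq_zero hs fun a _ => hb a
  · simpa [hvan s hs] using (decompose 𝒜 b s).2

lemma eq_zero_of_e_eq_zero (hconn : 𝒜 0 = Submodule.span k {1}) {w : A} (hw : w ∈ 𝒜 N)
    (hew : e w = 0) : w = 0 := by
  rw [← decompose_of_mem_same 𝒜 hw]
  refine he.decompose_eq_zero_of_forall_e_mul_eq_zero le_rfl fun a ha => ?_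
  rw [Nat.sub_self, hconn] at ha
  obtain ⟨c, rfl⟩ := Submodule.mem_span_singleton.mp ha
  rw [smul_mul_assoc, one_mul, map_smul, hew, smul_zero]

lemma e_smul_eq_e_smul (hconn : 𝒜 0 = Submodule.span k {1}) {w ω : A} (hw : w ∈ 𝒜 N)
    (hω : ω ∈ 𝒜 N) : e ω • w = e w • ω := by
  refine sub_eq_zero.mp (he.eq_zero_of_e_eq_zero hconn
    (sub_mem (Submodule.smul_mem _ _ hw) (Submodule.smul_mem _ _ hω)) ?_)
  rw [map_sub, map_smul, map_smul, smul_eq_mul, smul_eq_mul, mul_comm, sub_self]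

/-- Frobenius reciprocity. -/
lemma exists_linearMap_e_mul_eq [FiniteDimensional k A] (hvan : ∀ m, N < m → 𝒜 m = ⊥)
    {M : Type*} [AddCommGroup M] [Module k M] [Module A M] [IsScalarTower k A M]
    (ψ : M →ₗ[k] k) : ∃ ℓ : M →ₗ[A] A, ∀ x a, e (a * ℓ x) = ψ (a • x) := by
  let Θ : A →ₗ[k] Module.Dual k A := (LinearMap.mul k A).flip.compr₂ e
  have hΘinj : Function.Injective Θ := by
    rw [← LinearMap.ker_eq_bot, Submodule.eq_bot_iff]
    exact fun b hb => he.eq_zero_of_forall_e_mul_eq_zero hvan fun a => LinearMap.congr_fun hb a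
  let Θe : A ≃ₗ[k] Module.Dual k A := LinearEquiv.ofBijective Θ ⟨hΘinj,
    (LinearMap.injective_iff_surjective_of_finrank_eq_finrank
      Subspace.dual_finrank_eq.symm).mp hΘinj⟩
  let F : M →ₗ[k] Module.Dual k A := (Algebra.lsmul k k M).toLinearMap.flip.compr₂ ψ
  have hF : ∀ x a, e (a * Θe.symm (F x)) = ψ (a • x) := fun x a =>
    LinearMap.congr_fun (Θe.apply_symm_apply (F x)) a
  let ℓ : M →ₗ[A] A :=
    { toFun := fun x => Θe.symm (F x)
      map_add' := fun x y => by simp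
      map_smul' := fun c x => hΘinj <| LinearMap.ext fun a => by
        change e (a * Θe.symm (F (c • x))) = e (a * (c * Θe.symm (F x)))
        rw [hF, ← mul_assoc, hF, mul_smul] }
  exact ⟨ℓ, hF⟩

end IsPoincareFunctional

end Poincare

section Nakayama

variable {k A : Type*} [Field k] [Ring A] [Algebra k A] {𝒜 : ℕ → Submodule k A}
  {E : Subalgebra k A} {Y : Type*} [AddCommGroup Y] [Module k Y] [Module E Y]

variable (𝒜 E Y) in
def degreeGESmul (t : ℕ) : Submodule k Y :=
  Submodule.span k {y | ∃ f : E, (f : A) ∈ degreeGE 𝒜 t ∧ ∃ y' : Y, y = f • y'}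

lemma degreeGESmul_eq_bot {N t : ℕ} (hvan : ∀ m, N < m → 𝒜 m = ⊥) (ht : N < t) :
    degreeGESmul 𝒜 E Y t = ⊥ := by
  rw [degreeGESmul, Submodule.span_eq_bot]
  rintro y ⟨f, hf, y', rfl⟩
  rw [degreeGE_eq_bot hvan ht, Submodule.mem_bot, ZeroMemClass.coe_eq_zero] at hf
  rw [hf, zero_smul]

variable [IsScalarTower k E Y]

lemma smul_mem_degreeGESmul [SetLike.GradedMonoid 𝒜] {t t' : ℕ} {f : E}
    (hf : (f : A) ∈ degreeGE 𝒜 t) {y : Y} (hy : y ∈ degreeGESmul 𝒜 E Y t') :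
    f • y ∈ degreeGESmul 𝒜 E Y (t + t') := by
  induction hy using Submodule.span_induction with
  | mem y hy =>
    obtain ⟨g, hg, y', rfl⟩ := hy
    exact Submodule.subset_span ⟨f * g, mul_mem_degreeGE hf hg, y', (mul_smul f g y').symm⟩
  | zero => simp
  | add y y' _ _ h h' => rw [smul_add]; exact add_mem h h'
  | smul c y _ h => rw [smul_comm]; exact Submodule.smul_mem _ _ h

/-- Nakayama's lemma for the nilpotent augmentation ideal of `E`. -/
lemma Submodule.eq_top_of_forall_mem_sup_degreeGESmul [SetLike.GradedMonoid 𝒜] {N : ℕ}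
    (hvan : ∀ m, N < m → 𝒜 m = ⊥) (S : Submodule E Y)
    (hS : ∀ y, y ∈ S.restrictScalars k ⊔ degreeGESmul 𝒜 E Y 1) : S = ⊤ := by
  have hstep : ∀ t, ∀ y, y ∈ S.restrictScalars k ⊔ degreeGESmul 𝒜 E Y (t + 1) := by
    intro t
    induction t with
    | zero => exact hS
    | succ t ih =>
      intro y
      obtain ⟨s, hs, q, hq, rfl⟩ := Submodule.mem_sup.mp (ih y)
      refine add_mem (Submodule.mem_sup_left hs) ?_
      refine (Submodule.span_le.mpr ?_ : degreeGESmul 𝒜 E Y (t + 1) ≤ _) hq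
      rintro _ ⟨f, hf, y', rfl⟩
      obtain ⟨s', hs', q', hq', rfl⟩ := Submodule.mem_sup.mp (hS y')
      rw [smul_add]
      exact add_mem (Submodule.mem_sup_left (S.smul_mem f hs'))
        (Submodule.mem_sup_right (smul_mem_degreeGESmul hf hq'))
  refine eq_top_iff.mpr fun y _ => ?_
  simpa [degreeGESmul_eq_bot hvan (Nat.lt_succ_self N)] using hstep N y

lemma linearCombination_surjective_of_isCompl [SetLike.GradedMonoid 𝒜] {N : ℕ}
    (hvan : ∀ m, N < m → 𝒜 m = ⊥) {C : Submodule k Y} (hC : IsCompl (degreeGESmul 𝒜 E Y 1) C)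
    {ι : Type*} (b : Module.Basis ι k C) :
    Function.Surjective (Finsupp.linearCombination E fun i => (b i : Y)) := by
  set φ := Finsupp.linearCombination E fun i => (b i : Y)
  have hCφ : C ≤ (LinearMap.range φ).restrictScalars k := by
    intro c hc
    have hspan := Submodule.apply_mem_span_image_of_mem_span C.subtype (b.mem_span ⟨c, hc⟩)
    rw [← Set.range_comp] at hspan
    refine Submodule.span_le.mpr ?_ hspan
    rintro _ ⟨i, rfl⟩
    exact ⟨Finsupp.single i 1, by simp [φ]⟩
  rw [← LinearMap.range_eq_top]
  refine Submodule.eq_top_of_forall_mem_sup_degreeGESmul hvan _ fun y => ?_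
  have hy : y ∈ degreeGESmul 𝒜 E Y 1 ⊔ C := hC.sup_eq_top ▸ Submodule.mem_top
  obtain ⟨q, hq, c, hc, rfl⟩ := Submodule.mem_sup.mp hy
  exact add_comm q c ▸ add_mem (Submodule.mem_sup_left (hCφ hc)) (Submodule.mem_sup_right hq)

lemma coe_apply_mem_degreeGE_one_of_linearCombination_eq_zero [GradedAlgebra 𝒜]
    (hconn : 𝒜 0 = Submodule.span k {1}) {C : Submodule k Y}
    (hC : Disjoint (degreeGESmul 𝒜 E Y 1) C) {ι : Type*} [Fintype ι] (b : Module.Basis ι k C)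
    {v : ι →₀ E} (hv : Finsupp.linearCombination E (fun i => (b i : Y)) v = 0) (i : ι) :
    (v i : A) ∈ degreeGE 𝒜 1 := by
  choose c hc using fun j => exists_sub_smul_one_mem_degreeGE_one hconn (v j : A)
  set r : ι → E := fun j => v j - algebraMap k E (c j)
  have hr : ∀ j, (r j : A) ∈ degreeGE 𝒜 1 := by
    simpa [r, Algebra.algebraMap_eq_smul_one] using hc
  have hsum : ∑ j, c j • (b j : Y) + ∑ j, r j • (b j : Y) = 0 := by
    rw [← hv, Finsupp.linearCombination_apply, Finsupp.sum_fintype _ _ (by simp),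
      ← Finset.sum_add_distrib]
    refine Finset.sum_congr rfl fun j _ => ?_
    rw [sub_smul, algebraMap_smul, add_sub_cancel]
  have hmem : ∑ j, c j • (b j : Y) ∈ degreeGESmul 𝒜 E Y 1 := by
    rw [eq_neg_of_add_eq_zero_left hsum]
    exact neg_mem (Submodule.sum_mem _ fun j _ => Submodule.subset_span ⟨r j, hr j, b j, rfl⟩)
  have hzero : ∑ j, c j • b j = 0 := by
    refine Subtype.ext ?_
    refine (Submodule.mem_bot k).mp (hC.le_bot ⟨?_, ?_⟩)
    · simpa using hmem
    · exact Submodule.coe_mem _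
  have hci := Fintype.linearIndependent_iff.mp b.linearIndependent c hzero i
  simpa [r, hci] using hr i

theorem Module.free_of_projective_of_connectedGraded [GradedAlgebra 𝒜]
    (hconn : 𝒜 0 = Submodule.span k {1}) {N : ℕ} (hvan : ∀ m, N < m → 𝒜 m = ⊥)
    [FiniteDimensional k Y] [Module.Projective E Y] : Module.Free E Y := by
  obtain ⟨C, hC⟩ := Submodule.exists_isCompl (degreeGESmul 𝒜 E Y 1)
  let b := Module.finBasis k C
  set φ := Finsupp.linearCombination E fun i => (b i : Y)
  have hsurj := linearCombination_surjective_of_isCompl hvan hC b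
  obtain ⟨σ, hσ⟩ := Module.projective_lifting_property φ LinearMap.id hsurj
  let π := LinearMap.id - σ ∘ₗ φ
  have hπ : ∀ w, π w ∈ LinearMap.ker φ := fun w => by
    simp [π, ← LinearMap.comp_apply φ σ, hσ]
  -- a kernel vector is `∑ j, w j • π (single j 1)` with all `w j` of positive degree
  have hbot : (⊥ : Submodule E (LinearMap.ker φ)) = ⊤ := by
    refine Submodule.eq_top_of_forall_mem_sup_degreeGESmul (E := E) (Y := LinearMap.ker φ) hvan _
      fun w => ?_
    refine Submodule.mem_sup_right ?_
    have hw : (w : Fin _ →₀ E) = ∑ j, (w : Fin _ →₀ E) j • π (Finsupp.single j 1) := by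
      have hfix : π w = w := by simp [π, LinearMap.mem_ker.mp w.2]
      conv_lhs => rw [← hfix, ← Finsupp.univ_sum_single (w : Fin (Module.finrank k C) →₀ E)]
      simp only [map_sum, ← map_smul, Finsupp.smul_single_one]
    rw [show w = ∑ j, (w : Fin _ →₀ E) j • ⟨π (Finsupp.single j 1), hπ _⟩ from
      Subtype.ext (by simpa using hw)]
    exact Submodule.sum_mem _ fun j _ => Submodule.subset_span
      ⟨_, coe_apply_mem_degreeGE_one_of_linearCombination_eq_zero hconn hC.disjoint b w.2 j, _, rfl⟩
  have hinj : Function.Injective φ := by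
    rw [← LinearMap.ker_eq_bot, Submodule.eq_bot_iff]
    intro w hw
    have hw0 : (⟨w, hw⟩ : LinearMap.ker φ) ∈ ⊥ := hbot ▸ Submodule.mem_top
    exact congrArg Subtype.val ((Submodule.mem_bot E).mp hw0)
  exact Module.Free.of_equiv (LinearEquiv.ofBijective φ ⟨hinj, hsurj⟩)

end Nakayama

lemma coe_decompose_map_of_forall_mem {k M ι : Type*} [Semiring k] [AddCommMonoid M] [Module k M]
    [DecidableEq ι] {ℳ : ι → Submodule k M} [Decomposition ℳ] (f : M →ₗ[k] M)
    (hf : ∀ j, ∀ x ∈ ℳ j, f x ∈ ℳ j) (x : M) (j : ι) :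
    (decompose ℳ (f x) j : M) = f (decompose ℳ x j) := by
  induction x using Decomposition.inductionOn ℳ with
  | zero => simp
  | @homogeneous i x =>
    obtain rfl | hij := eq_or_ne i j
    · rw [decompose_of_mem_same ℳ (hf i x x.2), decompose_of_mem_same ℳ x.2]
    · rw [decompose_of_mem_ne ℳ (hf i x x.2) hij, decompose_of_mem_ne ℳ x.2 hij, map_zero]
  | add x x' h h' =>
    simp only [map_add, decompose_add, DirectSum.add_apply, Submodule.coe_add, h, h']

section GradedModule

variable {k A : Type*} [Field k] [Ring A] [Algebra k A] {𝒜 : ℕ → Submodule k A}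
  {M : Type*} [AddCommGroup M] [Module k M] [Module A M] {ℳ : ℤ → Submodule k M} [Decomposition ℳ]
  (hℳ : ∀ (i : ℕ) (j : ℤ), ∀ a ∈ 𝒜 i, ∀ x ∈ ℳ j, a • x ∈ ℳ (i + j))
include hℳ

variable (𝒜 M) in
def lowDegreeSmul (E : Subalgebra k A) (d : ℤ) : Submodule k M :=
  Submodule.span k {w | ∃ s : ℕ, 0 < s ∧ (s : ℤ) ≤ d ∧ ∃ g ∈ E, g ∈ 𝒜 s ∧ ∃ v : M, w = g • v}

variable {E : Subalgebra k A} {X : Submodule A M} (hX : ∀ x ∈ X, ∀ j, (decompose ℳ x j : M) ∈ X)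
  {μ : ℤ} (hμ : ∀ j < μ, ∀ x ∈ X, x ∈ ℳ j → x = 0)

include hX hμ in
lemma coe_decompose_smul_mem_lowDegreeSmul_of_mem {s : ℕ} (hs : 0 < s) {g : A} (hgE : g ∈ E)
    (hg : g ∈ 𝒜 s) {y : M} (hy : y ∈ X) (D : ℤ) :
    (decompose ℳ (g • y) D : M) ∈ lowDegreeSmul 𝒜 M E (D - μ) := by
  classical
  rw [← sum_support_decompose ℳ y, Finset.smul_sum, decompose_sum, DFinsupp.finsetSum_apply,
    Submodule.coe_sum]
  refine Submodule.sum_mem _ fun j _ => ?_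
  have hgy := hℳ s j g hg _ (decompose ℳ y j).2
  by_cases hD : (s : ℤ) + j = D
  · rw [decompose_of_mem_same ℳ (hD ▸ hgy)]
    by_cases hj : j < μ
    · rw [hμ j hj _ (hX y hy j) (decompose ℳ y j).2, smul_zero]
      exact zero_mem _
    · exact Submodule.subset_span ⟨s, hs, by omega, g, hgE, hg, _, rfl⟩
  · rw [decompose_of_mem_ne ℳ hgy hD]
    exact zero_mem _

variable [GradedAlgebra 𝒜] (hE : ∀ x ∈ E, ∀ i, (decompose 𝒜 x i : A) ∈ E)

lemma coe_decompose_smul_of_mem {μ : ℤ} {m : M} (hm : m ∈ ℳ μ) (a : A) (i : ℕ) :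
    (decompose ℳ (a • m) (i + μ) : M) = (decompose 𝒜 a i : A) • m := by
  induction a using Decomposition.inductionOn 𝒜 with
  | zero => simp
  | @homogeneous s a =>
    obtain rfl | hsi := eq_or_ne s i
    · rw [decompose_of_mem_same ℳ (hℳ s μ a a.2 m hm), decompose_of_mem_same 𝒜 a.2]
    · rw [decompose_of_mem_ne ℳ (hℳ s μ a a.2 m hm) (by omega), decompose_of_mem_ne 𝒜 a.2 hsi,
        zero_smul]
  | add a a' h h' =>
    simp only [add_smul, decompose_add, DirectSum.add_apply, Submodule.coe_add, h, h']

include hE hX hμ in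
lemma coe_decompose_smul_mem_lowDegreeSmul {c : A} (hcE : c ∈ E) (hc : (decompose 𝒜 c 0 : A) = 0)
    {y : M} (hy : y ∈ X) (D : ℤ) : (decompose ℳ (c • y) D : M) ∈ lowDegreeSmul 𝒜 M E (D - μ) := by
  classical
  rw [← sum_support_decompose 𝒜 c, Finset.sum_smul, decompose_sum, DFinsupp.finsetSum_apply,
    Submodule.coe_sum]
  refine Submodule.sum_mem _ fun s _ => ?_
  obtain rfl | hs := Nat.eq_zero_or_pos s
  · simp [hc]
  · exact coe_decompose_smul_mem_lowDegreeSmul_of_mem hℳ hX hμ hs (hE c hcE s)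
      (decompose 𝒜 c s).2 hy D

include hE hX hμ in
lemma mem_lowDegreeSmul_of_smul_eq_zero (hconn : 𝒜 0 = Submodule.span k {1}) [Module.Free E X]
    {q : ℕ} {u : A} (huE : u ∈ E) (hu : u ∈ 𝒜 q) (hu0 : u ≠ 0) {x : M} (hxX : x ∈ X) {D : ℤ}
    (hx : x ∈ ℳ D) (hux : u • x = 0) : x ∈ lowDegreeSmul 𝒜 M E (D - μ) := by
  classical
  let b := Module.Free.chooseBasis E X
  set c := b.repr ⟨x, hxX⟩
  have hc : ∀ i, (decompose 𝒜 (c i : A) 0 : A) = 0 := by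
    intro i
    refine decompose_zero_eq_zero_of_mul_eq_zero hconn hu hu0 ?_
    have hux' := congrArg b.repr (Subtype.ext hux : (⟨u, huE⟩ : E) • (⟨x, hxX⟩ : X) = 0)
    rw [map_smul, map_zero] at hux'
    simpa using congrArg (fun v => (v i : A)) hux'
  have hxc : x = ∑ i ∈ c.support, c i • (b i : M) := by
    have := congrArg Subtype.val (b.linearCombination_repr ⟨x, hxX⟩)
    simpa [Finsupp.linearCombination_apply, Finsupp.sum] using this.symm
  rw [← decompose_of_mem_same ℳ hx, hxc, decompose_sum, DFinsupp.finsetSum_apply,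
    Submodule.coe_sum]
  exact Submodule.sum_mem _ fun i _ => coe_decompose_smul_mem_lowDegreeSmul hℳ hX hμ hE
    (c i).2 (hc i) (b i).2 D

end GradedModule

section Lowest

variable {k A : Type*} [Field k] [Ring A] [Algebra k A] {𝒜 : ℕ → Submodule k A} [GradedAlgebra 𝒜]
  {M : Type*} [AddCommGroup M] [Module k M] [Module A M]
  {ℳ : ℤ → Submodule k M} [Decomposition ℳ]
  (hℳ : ∀ (i : ℕ) (j : ℤ), ∀ a ∈ 𝒜 i, ∀ x ∈ ℳ j, a • x ∈ ℳ (i + j))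
  (hconn : 𝒜 0 = Submodule.span k {1})
  {X : Submodule A M} (hX : ∀ x ∈ X, ∀ j, (decompose ℳ x j : M) ∈ X)
  {μ : ℤ} (hμ : ∀ j < μ, ∀ x ∈ X, x ∈ ℳ j → x = 0)
  {m : M} (hmX : m ∈ X) (hm : m ∈ ℳ μ) (hm0 : m ≠ 0)
include hℳ hconn hX hμ hmX hm hm0

lemma smul_ne_zero_of_lowest {E : Subalgebra k A} (hE : ∀ x ∈ E, ∀ i, (decompose 𝒜 x i : A) ∈ E)
    [Module.Free E X] {q : ℕ} {u : A} (huE : u ∈ E) (hu : u ∈ 𝒜 q) (hu0 : u ≠ 0) :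
    u • m ≠ 0 := by
  intro hum
  have hmem := mem_lowDegreeSmul_of_smul_eq_zero hℳ hX hμ hE hconn huE hu hu0 hmX hm hum
  rw [sub_self, lowDegreeSmul, Submodule.span_eq_bot.mpr (by rintro _ ⟨s, hs, hs0, -⟩; omega),
    Submodule.mem_bot] at hmem
  exact hm0 hmem

lemma mul_smul_ne_zero_of_lowest [IsScalarTower k A M] {E₁ E₂ : Subalgebra k A}
    (hE₁ : ∀ x ∈ E₁, ∀ i, (decompose 𝒜 x i : A) ∈ E₁)
    (hE₂ : ∀ x ∈ E₂, ∀ i, (decompose 𝒜 x i : A) ∈ E₂) [Module.Free E₁ X] [Module.Free E₂ X]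
    {t₁ : A} {d₁ : ℕ} (ht₁ : t₁ ∈ 𝒜 d₁) {z : A} {dz : ℕ} (hz : z ∈ 𝒜 dz)
    (hzz : z * z = 0) (hzt₁E : z * t₁ ∈ E₁) (hzt₁0 : z * t₁ ≠ 0)
    (hbig : ∀ d : ℕ, 0 < d → ∀ y ∈ E₂, y ∈ 𝒜 d → y ≠ 0 → (¬ ∃ c : k, y = c • z) → d₁ < d)
    {u : A} {q : ℕ} (huE : u ∈ E₂) (hu : u ∈ 𝒜 q) (hu0 : u ≠ 0) :
    (u * t₁) • m ≠ 0 := by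
  have hzt₁m := smul_ne_zero_of_lowest hℳ hconn hX hμ hmX hm hm0 hE₁ hzt₁E
    (SetLike.mul_mem_graded hz ht₁) hzt₁0
  intro h
  rw [mul_smul] at h
  have hmem := mem_lowDegreeSmul_of_smul_eq_zero hℳ hX hμ hE₂ hconn huE hu hu0
    (X.smul_mem t₁ hmX) (hℳ d₁ μ t₁ ht₁ m hm) h
  rw [add_sub_cancel_right] at hmem
  refine hzt₁m ?_
  rw [mul_smul]
  refine Submodule.span_induction (p := fun w _ => z • w = 0) ?_ (smul_zero z)
    (fun _ _ _ _ h h' => by rw [smul_add, h, h', add_zero])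
    (fun c _ _ h => by rw [smul_comm, h, smul_zero]) hmem
  rintro _ ⟨s, hs, hsd, g, hgE, hg, v, rfl⟩
  obtain ⟨c, rfl⟩ : ∃ c : k, g = c • z := by
    by_cases hg0 : g = 0
    · exact ⟨0, by rw [hg0, zero_smul]⟩
    · by_contra hgz
      exact absurd (hbig s hs g hgE hg hg0 hgz) (by omega)
  rw [smul_smul, mul_smul_comm, hzz, smul_zero, zero_smul]

end Lowest

section SplitOff

variable {k A : Type*} [Field k] [Ring A] [Algebra k A] {𝒜 : ℕ → Submodule k A} [GradedAlgebra 𝒜]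
  {M : Type*} [AddCommGroup M] [Module k M] [Module A M] [IsScalarTower k A M]
  {ℳ : ℤ → Submodule k M} [Decomposition ℳ]
  (hℳ : ∀ (i : ℕ) (j : ℤ), ∀ a ∈ 𝒜 i, ∀ x ∈ ℳ j, a • x ∈ ℳ (i + j))
  (hconn : 𝒜 0 = Submodule.span k {1}) {N : ℕ} {e : A →ₗ[k] k} (he : IsPoincareFunctional 𝒜 N e)
  {ω : A} (hω : ω ∈ 𝒜 N) {μ : ℤ} {m : M} (hm : m ∈ ℳ μ) (hωm : ω • m ≠ 0)
include hℳ hconn he hω hm hωm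

lemma exists_dual_smul_eq :
    ∃ ψ : M →ₗ[k] k, (∀ a, ψ (a • m) = e a) ∧ ∀ j ≠ N + μ, ∀ x ∈ ℳ j, ψ x = 0 := by
  obtain ⟨ψ₀, hψ₀⟩ : ∃ ψ₀ : Module.Dual k M, ψ₀ (ω • m) ≠ 0 := by
    by_contra! h
    exact hωm ((Module.forall_dual_apply_eq_zero_iff k _).mp h)
  have heω : e ω ≠ 0 := fun h => hωm (by rw [he.eq_zero_of_e_eq_zero hconn hω h, zero_smul])
  let P : M →ₗ[k] M := (ℳ (N + μ)).subtype ∘ₗ component k ℤ (fun j => ℳ j) (N + μ) ∘ₗ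
    (decomposeLinearEquiv ℳ).toLinearMap
  have hP : ∀ x, P x = decompose ℳ x (N + μ) := fun x => rfl
  refine ⟨(e ω / ψ₀ (ω • m)) • ψ₀ ∘ₗ P, fun a => ?_, fun j hj x hx => ?_⟩
  · have hprop := congrArg (fun b : A => ψ₀ (b • m))
      (he.e_smul_eq_e_smul hconn (decompose 𝒜 a N).2 hω)
    simp only [smul_assoc, map_smul, smul_eq_mul] at hprop
    rw [LinearMap.smul_apply, LinearMap.comp_apply, hP, coe_decompose_smul_of_mem hℳ hm,
      he.e_eq_e_decompose a, smul_eq_mul]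
    field_simp
    linear_combination hprop
  · simp [hP, decompose_of_mem_ne ℳ hx hj]

lemma exists_linearMap_apply_eq_one [FiniteDimensional k A] (hvan : ∀ m, N < m → 𝒜 m = ⊥) :
    ∃ ℓ : M →ₗ[A] A, ℓ m = 1 ∧ ∀ j, ∀ x ∈ ℳ j, ℓ x • m ∈ ℳ j := by
  classical
  obtain ⟨ψ, hψm, hψ⟩ := exists_dual_smul_eq hℳ hconn he hω hm hωm
  obtain ⟨ℓ, hℓ⟩ := he.exists_linearMap_e_mul_eq hvan ψ
  refine ⟨ℓ, ?_, fun j x hx => ?_⟩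
  · refine sub_eq_zero.mp (he.eq_zero_of_forall_e_mul_eq_zero hvan fun a => ?_)
    rw [mul_sub, map_sub, hℓ, hψm, mul_one, sub_self]
  · rw [← sum_support_decompose 𝒜 (ℓ x), Finset.sum_smul]
    refine Submodule.sum_mem _ fun s _ => ?_
    by_cases hs : (s : ℤ) + μ = j
    · exact hs ▸ hℳ s μ _ (decompose 𝒜 (ℓ x) s).2 m hm
    -- `e (a * ℓ x) = ψ (a • x)` vanishes unless `deg a + j = N + μ`
    have hzero : (decompose 𝒜 (ℓ x) s : A) = 0 := by
      rcases le_or_gt s N with hsN | hsN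
      · refine he.decompose_eq_zero_of_forall_e_mul_eq_zero hsN fun a ha => ?_
        rw [hℓ, hψ _ (by omega) _ (hℳ _ j a ha x hx)]
      · simpa [hvan s hsN] using (decompose 𝒜 (ℓ x) s).2
    rw [hzero, zero_smul]
    exact zero_mem _

end SplitOff

def Submodule.prodInfKerEquiv {R M : Type*} [Ring R] [AddCommGroup M] [Module R M]
    (X : Submodule R M) (ℓ : M →ₗ[R] R) {m : M} (hmX : m ∈ X) (hℓm : ℓ m = 1) :
    (R × ↥(X ⊓ LinearMap.ker ℓ)) ≃ₗ[R] X where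
  toFun p := ⟨p.1 • m + p.2, add_mem (X.smul_mem p.1 hmX) p.2.2.1⟩
  invFun x := (ℓ x, ⟨x - ℓ x • m, sub_mem x.2 (X.smul_mem _ hmX), by simp [hℓm]⟩)
  map_add' p q := by ext; simp only [Prod.fst_add, Prod.snd_add, add_smul, Submodule.coe_add]; abel
  map_smul' c p := by ext; simp [mul_smul, smul_add]
  left_inv p := by ext <;> simp [hℓm, (LinearMap.mem_ker.mp p.2.2.2 : ℓ p.2 = 0)]
  right_inv x := by ext; simp

lemma exists_lowest {R k M : Type*} [Semiring R] [Semiring k] [AddCommMonoid M] [Module R M]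
    [Module k M] {ℳ : ℤ → Submodule k M} [Decomposition ℳ]
    (hbounded : ∃ b : ℤ, ∀ j : ℤ, j < b → ℳ j = ⊥) {X : Submodule R M}
    (hX : ∀ x ∈ X, ∀ j, (decompose ℳ x j : M) ∈ X) (hX0 : X ≠ ⊥) :
    ∃ μ : ℤ, (∀ j < μ, ∀ x ∈ X, x ∈ ℳ j → x = 0) ∧ ∃ m ∈ X, m ∈ ℳ μ ∧ m ≠ 0 := by
  obtain ⟨x, hxX, hx0⟩ := Submodule.exists_mem_ne_zero_of_ne_bot hX0
  obtain ⟨j, hj⟩ : ∃ j, (decompose ℳ x j : M) ≠ 0 := by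
    by_contra! h
    exact hx0 ((decompose ℳ).injective (by ext j : 1; simpa using h j))
  obtain ⟨b, hb⟩ := hbounded
  obtain ⟨μ, ⟨m, hmX, hm, hm0⟩, hμ⟩ := Int.exists_least_of_bdd
    (P := fun j => ∃ m ∈ X, m ∈ ℳ j ∧ m ≠ 0)
    ⟨b, fun j ⟨m, _, hm, hm0⟩ => not_lt.mp fun hjb => hm0 (by simpa [hb j hjb] using hm)⟩
    ⟨j, _, hX x hxX j, (decompose ℳ x j).2, hj⟩
  exact ⟨μ, fun j hj y hyX hy => by_contra fun hy0 => (hμ j ⟨y, hyX, hy, hy0⟩).not_gt hj,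
    m, hmX, hm, hm0⟩

section Induction

variable {k A : Type*} [Field k] [Ring A] [Algebra k A] {𝒜 : ℕ → Submodule k A}
  {M : Type*} [AddCommGroup M] [Module k M] [Module A M] [IsScalarTower k A M]
  {ℳ : ℤ → Submodule k M} [Decomposition ℳ]

lemma decompose_mem_inf_ker {X : Submodule A M} (hX : ∀ x ∈ X, ∀ j, (decompose ℳ x j : M) ∈ X)
    {ℓ : M →ₗ[A] A} {m : M} (hℓm : ℓ m = 1) (hℓ : ∀ j, ∀ x ∈ ℳ j, ℓ x • m ∈ ℳ j) :
    ∀ x ∈ X ⊓ LinearMap.ker ℓ, ∀ j, (decompose ℳ x j : M) ∈ X ⊓ LinearMap.ker ℓ := by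
  rintro x ⟨hxX, hxℓ⟩ j
  let ρ : M →ₗ[k] M := (LinearMap.toSpanSingleton A M m ∘ₗ ℓ).restrictScalars k
  have hρ := coe_decompose_map_of_forall_mem ρ hℓ x j
  simp only [ρ, LinearMap.restrictScalars_apply, LinearMap.comp_apply,
    LinearMap.toSpanSingleton_apply, LinearMap.mem_ker.mp hxℓ, zero_smul, decompose_zero,
    DirectSum.zero_apply, ZeroMemClass.coe_zero] at hρ
  refine ⟨hX x hxX j, LinearMap.mem_ker.mpr ?_⟩
  simpa [hℓm] using congrArg ℓ hρ.symm

theorem Submodule.free_of_lowest_smul_ne_zero [FiniteDimensional k A] [FiniteDimensional k M]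
    [GradedAlgebra 𝒜] {N : ℕ} (hA : IsConnectedPoincare k A 𝒜 N)
    (hℳ : ∀ (i : ℕ) (j : ℤ), ∀ a ∈ 𝒜 i, ∀ x ∈ ℳ j, a • x ∈ ℳ (i + j))
    (hbounded : ∃ b : ℤ, ∀ j : ℤ, j < b → ℳ j = ⊥) {E₁ E₂ : Subalgebra k A}
    {ω : A} (hω : ω ∈ 𝒜 N)
    (hωm : ∀ X : Submodule A M, (∀ x ∈ X, ∀ j, (decompose ℳ x j : M) ∈ X) →
      Module.Free E₁ X → Module.Free E₂ X → ∀ μ : ℤ, (∀ j < μ, ∀ x ∈ X, x ∈ ℳ j → x = 0) →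
      ∀ m ∈ X, m ∈ ℳ μ → m ≠ 0 → ω • m ≠ 0)
    (X : Submodule A M) (hX : ∀ x ∈ X, ∀ j, (decompose ℳ x j : M) ∈ X)
    [Module.Free E₁ X] [Module.Free E₂ X] : Module.Free A X := by
  obtain ⟨hconn, hvan, e, he⟩ := hA
  have (K : Submodule A M) : FiniteDimensional k K :=
    inferInstanceAs (FiniteDimensional k (K.restrictScalars k))
  induction h : Module.finrank k X using Nat.strong_induction_on generalizing X with
  | _ r ih =>
  rcases eq_or_ne X ⊥ with rfl | hX0
  · exact Module.Free.of_subsingleton A _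
  obtain ⟨μ, hμ, m, hmX, hm, hm0⟩ := exists_lowest hbounded hX hX0
  have hωm' := hωm X hX ‹_› ‹_› μ hμ m hmX hm hm0
  obtain ⟨ℓ, hℓm, hℓ⟩ := exists_linearMap_apply_eq_one hℳ hconn he hω hm hωm' hvan
  set K := X ⊓ LinearMap.ker ℓ
  let Ψ : (A × K) ≃ₗ[A] X := X.prodInfKerEquiv ℓ hmX hℓm
  have hfree : ∀ E : Subalgebra k A, Module.Free E X → Module.Free E K := by
    intro E _
    have := Module.Projective.of_equiv (Ψ.restrictScalars E).symm
    have := Module.Projective.of_split (LinearMap.inr E A K) (LinearMap.snd E A K)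
      (LinearMap.snd_comp_inr E A K)
    exact Module.free_of_projective_of_connectedGraded hconn hvan
  have : Nontrivial A := ⟨⟨ω, 0, fun h0 => hωm' (by rw [h0, zero_smul])⟩⟩
  have hrank : Module.finrank k X = Module.finrank k A + Module.finrank k K := by
    rw [← Module.finrank_prod, (Ψ.restrictScalars k).finrank_eq]
  have := hfree E₁ ‹_›
  have := hfree E₂ ‹_›
  have := ih (Module.finrank k K) (by have := Module.finrank_pos (R := k) (M := A); omega) K
    (decompose_mem_inf_ker hX hℓm hℓ) rfl
  exact Module.Free.of_equiv Ψ

end Induction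

theorem free_of_free_over_subalgebras_general (k A : Type*) [Field k] [Ring A] [Algebra k A]
    [FiniteDimensional k A] (𝒜 : ℕ → Submodule k A) [GradedAlgebra 𝒜] (N : ℕ)
    (hA : IsConnectedPoincare k A 𝒜 N)
    (E₁ E₂ : Subalgebra k A)
    (hE₁graded : ∀ x ∈ E₁, ∀ i : ℕ, (DirectSum.decompose 𝒜 x i : A) ∈ E₁)
    (hE₂graded : ∀ x ∈ E₂, ∀ i : ℕ, (DirectSum.decompose 𝒜 x i : A) ∈ E₂)
    (hE₂P : ∃ n₂, SubalgebraIsConnectedPoincare k A 𝒜 E₂ n₂)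
    (M : Type*) [AddCommGroup M] [Module k M] [Module A M] [IsScalarTower k A M]
    (hMfg : Module.Finite A M)
    (ℳ : ℤ → Submodule k M) [DirectSum.Decomposition ℳ]
    (hgradedSMul : ∀ (i : ℕ) (j : ℤ), ∀ a ∈ 𝒜 i, ∀ x ∈ ℳ j, a • x ∈ ℳ ((i : ℤ) + j))
    (hbounded : ∃ b : ℤ, ∀ j : ℤ, j < b → ℳ j = ⊥)
    (hMfree₁ : Module.Free ↥E₁ M) (hMfree₂ : Module.Free ↥E₂ M)
    (t₁ t₂ : A) (d₁ d₂ : ℕ)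
    (ht₁deg : t₁ ∈ 𝒜 d₁)
    (ht₂E : t₂ ∈ E₂) (ht₂deg : t₂ ∈ 𝒜 d₂) (ht₂0 : t₂ ≠ 0)
    (hdeg : d₁ + d₂ = N)
    (z : A) (dz : ℕ) (hzdeg : z ∈ 𝒜 dz)
    (hzsq : z * z = 0) (hzt₁E : z * t₁ ∈ E₁) (hzt₁0 : z * t₁ ≠ 0)
    (hbig : ∀ d : ℕ, 0 < d → ∀ y ∈ E₂, y ∈ 𝒜 d → y ≠ 0 →
      (¬ ∃ c : k, y = c • z) → d₁ < d) :
    Module.Free A M := by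
  obtain ⟨n₂, -, hvan₂, e₂, -, hpair₂⟩ := hE₂P
  have : Nontrivial A := ⟨⟨t₂, 0, ht₂0⟩⟩
  obtain ⟨ω₂, hω₂E, hω₂, he₂ω₂⟩ :=
    (hpair₂ 0 n₂.zero_le).1 1 E₂.one_mem (SetLike.one_mem_graded 𝒜) one_ne_zero
  rw [Nat.sub_zero] at hω₂
  have hω₂0 : ω₂ ≠ 0 := by rintro rfl; simp at he₂ω₂
  have hd₂ : d₂ ≤ n₂ := not_lt.mp fun h => ht₂0 (hvan₂ d₂ h t₂ ht₂E ht₂deg)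
  have : Module.Finite k M := Module.Finite.trans A M
  have : Module.Free E₁ (⊤ : Submodule A M) :=
    Module.Free.of_equiv (Submodule.topEquiv.restrictScalars E₁).symm
  have : Module.Free E₂ (⊤ : Submodule A M) :=
    Module.Free.of_equiv (Submodule.topEquiv.restrictScalars E₂).symm
  have := Submodule.free_of_lowest_smul_ne_zero hA hgradedSMul hbounded (E₁ := E₁) (E₂ := E₂)
    (mem_of_mem_of_le hA.2.1 (SetLike.mul_mem_graded hω₂ ht₁deg) (by omega))
    (fun X hX _ _ μ hμ m hmX hm hm0 => mul_smul_ne_zero_of_lowest hgradedSMul hA.1 hX hμ hmX hm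
      hm0 hE₁graded hE₂graded ht₁deg hzdeg hzsq hzt₁E hzt₁0 hbig hω₂E hω₂ hω₂0)
    ⊤ fun _ _ _ => trivial
  exact Module.Free.of_equiv (Submodule.topEquiv : (⊤ : Submodule A M) ≃ₗ[A] M)

/-- the detection lemma, Lemma 4.10 of the paper.  Let `A` be a
finite-dimensional connected graded Poincaré algebra of top degree `N` over a field
`k`, and `E₁, E₂ ⊆ A` graded unital subalgebras that are themselves connected
Poincaré algebras for the induced grading, with `A` free as a left module over each
of them.  Let `M` be a finitely generated graded left `A`-module (bounded below)
which is free over `E₁` and over `E₂`.  Suppose there are nonzero homogeneous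
`t₁ ∈ E₁` of degree `d₁` and `t₂ ∈ E₂` of degree `d₂` with `d₁ + d₂ = N`, and that
every nonzero homogeneous `y ∈ E₂` of positive degree has degree `> d₁`, except
possibly for the nonzero scalar multiples of a fixed homogeneous `z ∈ E₂` with
`z² = 0`, `z·t₁ ∈ E₁` and `z·t₁ ≠ 0`.  Then `M` is a free left `A`-module. -/
theorem free_of_free_over_subalgebras (k A : Type*) [Field k] [Ring A] [Algebra k A]
    [FiniteDimensional k A] (𝒜 : ℕ → Submodule k A) [GradedAlgebra 𝒜] (N : ℕ)
    (hA : IsConnectedPoincare k A 𝒜 N)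
    (E₁ E₂ : Subalgebra k A)
    (hE₁graded : ∀ x ∈ E₁, ∀ i : ℕ, (DirectSum.decompose 𝒜 x i : A) ∈ E₁)
    (hE₂graded : ∀ x ∈ E₂, ∀ i : ℕ, (DirectSum.decompose 𝒜 x i : A) ∈ E₂)
    (hE₁P : ∃ n₁, SubalgebraIsConnectedPoincare k A 𝒜 E₁ n₁)
    (hE₂P : ∃ n₂, SubalgebraIsConnectedPoincare k A 𝒜 E₂ n₂)
    (hAfree₁ : Module.Free ↥E₁ A) (hAfree₂ : Module.Free ↥E₂ A)
    (M : Type*) [AddCommGroup M] [Module k M] [Module A M] [IsScalarTower k A M]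
    (hMfg : Module.Finite A M)
    (ℳ : ℤ → Submodule k M) [DirectSum.Decomposition ℳ]
    (hgradedSMul : ∀ (i : ℕ) (j : ℤ), ∀ a ∈ 𝒜 i, ∀ x ∈ ℳ j, a • x ∈ ℳ ((i : ℤ) + j))
    (hbounded : ∃ b : ℤ, ∀ j : ℤ, j < b → ℳ j = ⊥)
    (hMfree₁ : Module.Free ↥E₁ M) (hMfree₂ : Module.Free ↥E₂ M)
    (t₁ t₂ : A) (d₁ d₂ : ℕ)
    (ht₁E : t₁ ∈ E₁) (ht₁deg : t₁ ∈ 𝒜 d₁) (ht₁0 : t₁ ≠ 0)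
    (ht₂E : t₂ ∈ E₂) (ht₂deg : t₂ ∈ 𝒜 d₂) (ht₂0 : t₂ ≠ 0)
    (hdeg : d₁ + d₂ = N)
    (z : A) (dz : ℕ) (hzE : z ∈ E₂) (hzdeg : z ∈ 𝒜 dz)
    (hzsq : z * z = 0) (hzt₁E : z * t₁ ∈ E₁) (hzt₁0 : z * t₁ ≠ 0)
    (hbig : ∀ d : ℕ, 0 < d → ∀ y ∈ E₂, y ∈ 𝒜 d → y ≠ 0 →
      (¬ ∃ c : k, y = c • z) → d₁ < d) :
    Module.Free A M :=
  free_of_free_over_subalgebras_general k A 𝒜 N hA E₁ E₂ hE₁graded hE₂graded hE₂P M hMfg ℳ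
    hgradedSMul hbounded hMfree₁ hMfree₂ t₁ t₂ d₁ d₂ ht₁deg ht₂E ht₂deg ht₂0 hdeg z dz hzdeg hzsq
    hzt₁E hzt₁0 hbig
end
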